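/- Let P, Q ⊆ 2^ω be measurable with Q ⊆ P, σ a string, and δ < 1/2 such that for all ρ ⪰ σ with [ρ] ∩ Q ≠ ∅ one has μ_ρ(Q) + δ ≥ μ_ρ(P). Let ε > 0 with ε < min(1/2 − δ, μ_σ(Q)), and let Q^ε_σ = {X ∈ Q ∩ [σ] : ∀ n ≥ |σ|, μ_{X↾n}(Q) ≥ ε}. Then for every τ ⪰ σ with [τ] ∩ Q^ε_σ ≠ ∅, we have μ_τ(Q^ε_σ) + (ε + δ) ≥ μ_τ(P), and ε + δ < 1/2. -/

import Mathlib

open MeasureTheory Filter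
open scoped ENNReal

/-- The cylinder of infinite binary sequences extending the finite string `τ`. -/
def cyl (τ : List Bool) : Set (ℕ → Bool) := {X | ∀ i : Fin τ.length, X i = τ.get i}

/-- Relative measure `μ_τ(P) = μ(P ∩ [τ]) / μ([τ])`. -/
noncomputable def relMeas (μ : Measure (ℕ → Bool)) (τ : List Bool)
    (P : Set (ℕ → Bool)) : ℝ≥0∞ := μ (P ∩ cyl τ) / μ (cyl τ)

/-- The length-`n` prefix of an infinite binary sequence. -/
def pre (X : ℕ → Bool) (n : ℕ) : List Bool := List.ofFn fun i : Fin n => X i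

/-!
Inside `[τ]`, a point of `Q` falls outside `Q^ε_σ` only if some prefix `X ↾ n` has
`μ_{X↾n}(Q) < ε`; since the witness in `[τ] ∩ Q^ε_σ` shares its prefixes of length `< |τ|`
with every point of `[τ]`, such a prefix already extends `τ`. The shortest such prefixes form
an antichain of cylinders below `[τ]`, on each of which `Q` has relative measure `< ε`, so the
part of `Q ∩ [τ]` lost in passing to `Q^ε_σ` has relative measure at most `ε`. Hence
`μ_τ(P) ≤ μ_τ(Q) + δ ≤ μ_τ(Q^ε_σ) + ε + δ`.
-/

lemma length_pre (X : ℕ → Bool) (n : ℕ) : (pre X n).length = n := List.length_ofFn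

lemma take_pre (X : ℕ → Bool) {m n : ℕ} (h : m ≤ n) : (pre X n).take m = pre X m := by
  apply List.ext_get
  · simp [pre, h]
  · intro i _ _
    simp [pre]

lemma mem_cyl_iff_pre_eq {X : ℕ → Bool} {τ : List Bool} : X ∈ cyl τ ↔ pre X τ.length = τ := by
  constructor
  · intro h
    apply List.ext_get (by simp [pre])
    intro i _ h₂
    simpa [pre] using h ⟨i, h₂⟩
  · intro h i
    have := List.getElem_of_eq h (i := i) (by simp [pre])
    simpa [pre] using this

lemma mem_cyl_pre (X : ℕ → Bool) (n : ℕ) : X ∈ cyl (pre X n) := by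
  rw [mem_cyl_iff_pre_eq, length_pre]

lemma cyl_nil : cyl [] = Set.univ := by
  ext X
  simp [cyl]

lemma pre_eq_of_mem_cyl {X Y : ℕ → Bool} {τ : List Bool} (hX : X ∈ cyl τ) (hY : Y ∈ cyl τ)
    {n : ℕ} (hn : n ≤ τ.length) : pre X n = pre Y n := by
  rw [← take_pre X hn, ← take_pre Y hn, mem_cyl_iff_pre_eq.mp hX, mem_cyl_iff_pre_eq.mp hY]

lemma cyl_subset_cyl {ρ ρ' : List Bool} (h : ρ <+: ρ') : cyl ρ' ⊆ cyl ρ := by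
  intro X hX
  rw [mem_cyl_iff_pre_eq] at hX ⊢
  rw [← take_pre X h.length_le, hX, ← List.prefix_iff_eq_take.mp h]

lemma prefix_of_mem_cyl {X : ℕ → Bool} {ρ₁ ρ₂ : List Bool} (h₁ : X ∈ cyl ρ₁)
    (h₂ : X ∈ cyl ρ₂) (hlen : ρ₁.length ≤ ρ₂.length) : ρ₁ <+: ρ₂ := by
  rw [mem_cyl_iff_pre_eq] at h₁ h₂
  rw [← h₁, ← h₂, ← take_pre X hlen]
  exact List.take_prefix _ _

lemma measurableSet_cyl (τ : List Bool) : MeasurableSet (cyl τ) := by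
  have : cyl τ = ⋂ i : Fin τ.length, {X : ℕ → Bool | X i = τ.get i} := by
    ext X
    simp [cyl]
  rw [this]
  exact MeasurableSet.iInter fun i => measurable_pi_apply (i : ℕ) (MeasurableSet.singleton _)

lemma relMeas_le_iff {μ : Measure (ℕ → Bool)} [IsFiniteMeasure μ] {τ : List Bool}
    (hτ : μ (cyl τ) ≠ 0) (Q : Set (ℕ → Bool)) (c : ℝ≥0∞) :
    relMeas μ τ Q ≤ c ↔ μ (Q ∩ cyl τ) ≤ c * μ (cyl τ) :=
  ENNReal.div_le_iff hτ (measure_ne_top μ _)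

def firstDrops (μ : Measure (ℕ → Bool)) (Q : Set (ℕ → Bool)) (ε : ℝ≥0∞) (τ : List Bool) :
    Set (List Bool) :=
  {ρ | τ <+: ρ ∧ relMeas μ ρ Q < ε ∧
    ∀ m, τ.length ≤ m → m < ρ.length → ε ≤ relMeas μ (ρ.take m) Q}

section firstDrops

variable {μ : Measure (ℕ → Bool)} {Q : Set (ℕ → Bool)} {ε : ℝ≥0∞} {τ : List Bool}

lemma eq_of_prefix_of_mem_firstDrops {ρ₁ ρ₂ : List Bool} (h₁ : ρ₁ ∈ firstDrops μ Q ε τ)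
    (h₂ : ρ₂ ∈ firstDrops μ Q ε τ) (h : ρ₁ <+: ρ₂) : ρ₁ = ρ₂ := by
  rcases h.length_le.eq_or_lt with heq | hlt
  · exact h.eq_of_length heq
  · have := h₂.2.2 ρ₁.length h₁.1.length_le hlt
    rw [← List.prefix_iff_eq_take.mp h] at this
    exact absurd this h₁.2.1.not_ge

lemma pairwiseDisjoint_cyl_firstDrops : (firstDrops μ Q ε τ).PairwiseDisjoint cyl := by
  intro ρ₁ h₁ ρ₂ h₂ hne
  refine Set.disjoint_left.mpr fun X hX₁ hX₂ => hne ?_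
  rcases le_total ρ₁.length ρ₂.length with hle | hle
  · exact eq_of_prefix_of_mem_firstDrops h₁ h₂ (prefix_of_mem_cyl hX₁ hX₂ hle)
  · exact (eq_of_prefix_of_mem_firstDrops h₂ h₁ (prefix_of_mem_cyl hX₂ hX₁ hle)).symm

lemma mem_biUnion_firstDrops {X : ℕ → Bool} (hX : X ∈ cyl τ)
    (h : ∃ n, τ.length ≤ n ∧ relMeas μ (pre X n) Q < ε) :
    X ∈ ⋃ ρ ∈ firstDrops μ Q ε τ, cyl ρ := by
  classical
  obtain ⟨hτn, hdrop⟩ := Nat.find_spec h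
  refine Set.mem_biUnion (x := pre X (Nat.find h)) ⟨?_, hdrop, ?_⟩ (mem_cyl_pre X _)
  · rw [List.prefix_iff_eq_take, take_pre X hτn, mem_cyl_iff_pre_eq.mp hX]
  · intro m hτm hm
    rw [length_pre] at hm
    rw [take_pre X hm.le]
    exact not_lt.mp fun hlt => Nat.find_min h hm ⟨hτm, hlt⟩

lemma measure_inter_biUnion_firstDrops_le [IsFiniteMeasure μ] (hμ : ∀ ρ, μ (cyl ρ) ≠ 0) :
    μ (Q ∩ ⋃ ρ ∈ firstDrops μ Q ε τ, cyl ρ) ≤ ε * μ (cyl τ) := by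
  have hcount : (firstDrops μ Q ε τ).Countable := Set.to_countable _
  calc μ (Q ∩ ⋃ ρ ∈ firstDrops μ Q ε τ, cyl ρ)
      = μ (⋃ ρ ∈ firstDrops μ Q ε τ, Q ∩ cyl ρ) := by rw [Set.inter_iUnion₂]
    _ ≤ ∑' ρ : firstDrops μ Q ε τ, μ (Q ∩ cyl ρ) := measure_biUnion_le μ hcount _
    _ ≤ ∑' ρ : firstDrops μ Q ε τ, ε * μ (cyl ρ) :=
        ENNReal.tsum_le_tsum fun ρ => (relMeas_le_iff (hμ ρ) Q ε).mp ρ.2.2.1.le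
    _ = ε * μ (⋃ ρ ∈ firstDrops μ Q ε τ, cyl ρ) := by
        rw [ENNReal.tsum_mul_left,
          measure_biUnion hcount pairwiseDisjoint_cyl_firstDrops fun ρ _ => measurableSet_cyl ρ]
    _ ≤ ε * μ (cyl τ) :=
        mul_le_mul_right (measure_mono (Set.iUnion₂_subset fun ρ hρ => cyl_subset_cyl hρ.1)) ε

lemma relMeas_le_relMeas_add_of_diff_subset [IsFiniteMeasure μ] (hμ : ∀ ρ, μ (cyl ρ) ≠ 0)
    {R : Set (ℕ → Bool)} (hcover : (Q ∩ cyl τ) \ R ⊆ ⋃ ρ ∈ firstDrops μ Q ε τ, cyl ρ) :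
    relMeas μ τ Q ≤ relMeas μ τ R + ε := by
  rw [relMeas_le_iff (hμ τ), add_mul, relMeas, ENNReal.div_mul_cancel (hμ τ) (measure_ne_top μ _)]
  calc μ (Q ∩ cyl τ) ≤ μ (R ∩ cyl τ) + μ ((Q ∩ cyl τ) \ R) := by
        refine (measure_mono fun X hX => ?_).trans (measure_union_le _ _)
        by_cases hXR : X ∈ R
        · exact Or.inl ⟨hXR, hX.2⟩
        · exact Or.inr ⟨hX, hXR⟩
    _ ≤ μ (R ∩ cyl τ) + ε * μ (cyl τ) := by
        gcongr
        exact (measure_mono (Set.subset_inter (fun _ hX => hX.1.1) hcover)).trans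
          (measure_inter_biUnion_firstDrops_le hμ)

end firstDrops

lemma diff_subset_biUnion_firstDrops {μ : Measure (ℕ → Bool)} {Q : Set (ℕ → Bool)}
    {ε : ℝ≥0∞} {σ τ : List Bool} (hστ : σ <+: τ) {Y : ℕ → Bool} (hYτ : Y ∈ cyl τ)
    (hY : ∀ n ≥ σ.length, ε ≤ relMeas μ (pre Y n) Q) :
    (Q ∩ cyl τ) \ {X ∈ Q ∩ cyl σ | ∀ n ≥ σ.length, ε ≤ relMeas μ (pre X n) Q} ⊆
      ⋃ ρ ∈ firstDrops μ Q ε τ, cyl ρ := by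
  rintro X ⟨⟨hXQ, hXτ⟩, hX⟩
  obtain ⟨n, hσn, hdrop⟩ : ∃ n ≥ σ.length, relMeas μ (pre X n) Q < ε := by
    simpa [hXQ, cyl_subset_cyl hστ hXτ] using hX
  refine mem_biUnion_firstDrops hXτ ⟨n, not_lt.mp fun hnτ => ?_, hdrop⟩
  rw [pre_eq_of_mem_cyl hXτ hYτ hnτ.le] at hdrop
  exact (hY n hσn).not_gt hdrop

theorem stmt7_general (μ : Measure (ℕ → Bool))
    (hμ : ∀ τ : List Bool, μ (cyl τ) = (2 : ℝ≥0∞)⁻¹ ^ τ.length)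
    (P Q : Set (ℕ → Bool)) (σ : List Bool)
    (δ : ℝ≥0∞)
    (hcond : ∀ ρ : List Bool, σ <+: ρ → (cyl ρ ∩ Q).Nonempty →
      relMeas μ ρ P ≤ relMeas μ ρ Q + δ)
    (ε : ℝ≥0∞) (hε₁ : ε < 1/2 - δ)
    (Qes : Set (ℕ → Bool))
    (hQes : Qes = {X ∈ Q ∩ cyl σ | ∀ n ≥ σ.length, ε ≤ relMeas μ (pre X n) Q}) :
    (∀ τ : List Bool, σ <+: τ → (cyl τ ∩ Qes).Nonempty →
      relMeas μ τ P ≤ relMeas μ τ Qes + (ε + δ)) ∧ ε + δ < 1/2 := by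
  have : IsFiniteMeasure μ := ⟨by simp [← cyl_nil, hμ]⟩
  have hμ0 : ∀ ρ, μ (cyl ρ) ≠ 0 := fun ρ => by simp [hμ]
  refine ⟨fun τ hστ ⟨Y, hYτ, hYQes⟩ => ?_, lt_tsub_iff_right.mp hε₁⟩
  rw [hQes] at hYQes ⊢
  have hQ := relMeas_le_relMeas_add_of_diff_subset hμ0
    (diff_subset_biUnion_firstDrops hστ hYτ hYQes.2)
  calc relMeas μ τ P ≤ relMeas μ τ Q + δ := hcond τ hστ ⟨Y, hYτ, hYQes.1.1⟩
    _ ≤ _ := by rw [← add_assoc]; gcongr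

theorem stmt7 (μ : Measure (ℕ → Bool))
    (hμ : ∀ τ : List Bool, μ (cyl τ) = (2 : ℝ≥0∞)⁻¹ ^ τ.length)
    (P Q : Set (ℕ → Bool)) (hP : MeasurableSet P) (hQ : MeasurableSet Q)
    (hQP : Q ⊆ P) (σ : List Bool)
    (δ : ℝ≥0∞) (hδ : δ < 1/2)
    (hcond : ∀ ρ : List Bool, σ <+: ρ → (cyl ρ ∩ Q).Nonempty →
      relMeas μ ρ P ≤ relMeas μ ρ Q + δ)
    (ε : ℝ≥0∞) (hε : 0 < ε) (hε₁ : ε < 1/2 - δ) (hε₂ : ε < relMeas μ σ Q)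
    (Qes : Set (ℕ → Bool))
    (hQes : Qes = {X ∈ Q ∩ cyl σ | ∀ n ≥ σ.length, ε ≤ relMeas μ (pre X n) Q}) :
    (∀ τ : List Bool, σ <+: τ → (cyl τ ∩ Qes).Nonempty →
      relMeas μ τ P ≤ relMeas μ τ Qes + (ε + δ)) ∧ ε + δ < 1/2 :=
  stmt7_general μ hμ P Q σ δ hcond ε hε₁ Qes hQes
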